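/- For all t = (t₁,t₂) ∈ ℝ² and all y ∈ ℝ⁴ with y ≠ 0, the 3×4 matrices B = B(t,y) and C = C(y) satisfy Bᵀ·B + Cᵀ·C = (1/|y|⁴) · ( |y|²·I₄ − ((1−|y|²)²/(1+|y|²)²) · y yᵀ ), where y yᵀ denotes the 4×4 outer-product matrix with (i,j) entry yᵢ·yⱼ. -/

import Mathlib

open Matrix

/-- The Euclidean norm `|y|` of `y ∈ ℝ⁴` (0-indexed coordinates). -/
noncomputable def nY (y : Fin 4 → ℝ) : ℝ :=
  Real.sqrt (y 0 ^ 2 + y 1 ^ 2 + y 2 ^ 2 + y 3 ^ 2)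

/-- The `3 × 4` matrix `B(t, y) = (2 / (|y|(1+|y|²)(1+|t|²))) · u·yᵀ`,
where `u = (1−|t|², 2t₁, 2t₂)ᵀ`. -/
noncomputable def B (t : Fin 2 → ℝ) (y : Fin 4 → ℝ) : Matrix (Fin 3) (Fin 4) ℝ :=
  (2 / (nY y * (1 + nY y ^ 2) * (1 + t 0 ^ 2 + t 1 ^ 2))) •
    Matrix.vecMulVec ![1 - t 0 ^ 2 - t 1 ^ 2, 2 * t 0, 2 * t 1] y

/-- The `3 × 4` matrix `C(y) = (1/|y|²) · (rows iy, jy, ky)`. -/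
noncomputable def C (y : Fin 4 → ℝ) : Matrix (Fin 3) (Fin 4) ℝ :=
  (1 / (y 0 ^ 2 + y 1 ^ 2 + y 2 ^ 2 + y 3 ^ 2)) •
    !![-y 1,  y 0, -y 3,  y 2;
       -y 2,  y 3,  y 0, -y 1;
       -y 3, -y 2,  y 1,  y 0]

set_option maxHeartbeats 1000000 in
theorem BtB_aux (t : Fin 2 → ℝ) (y : Fin 4 → ℝ)
    (hQ : 0 < y 0 ^ 2 + y 1 ^ 2 + y 2 ^ 2 + y 3 ^ 2) :
    (B t y)ᵀ * B t y = (4 / ((y 0 ^ 2 + y 1 ^ 2 + y 2 ^ 2 + y 3 ^ 2) *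
        (1 + (y 0 ^ 2 + y 1 ^ 2 + y 2 ^ 2 + y 3 ^ 2))^2)) • Matrix.vecMulVec y y := by
  set Q := y 0 ^ 2 + y 1 ^ 2 + y 2 ^ 2 + y 3 ^ 2 with hQdef
  have hn2 : nY y ^ 2 = Q := Real.sq_sqrt hQ.le
  have hn : nY y ≠ 0 := by intro h; rw [h] at hn2; simp at hn2; linarith
  have hT : (1 + t 0 ^ 2 + t 1 ^ 2) ≠ 0 := by positivity
  have h1Q : (1 : ℝ) + Q ≠ 0 := by positivity
  have hden : (nY y * (1 + nY y ^ 2) * (1 + t 0 ^ 2 + t 1 ^ 2))^2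
      = Q * (1+Q)^2 * (1 + t 0 ^ 2 + t 1 ^ 2)^2 := by
    rw [mul_pow, mul_pow, hn2]
  have key : (2 / (nY y * (1 + nY y ^ 2) * (1 + t 0 ^ 2 + t 1 ^ 2)))^2
        * (1 + t 0 ^ 2 + t 1 ^ 2)^2 = 4 / (Q * (1+Q)^2) := by
    rw [div_pow, hden, div_mul_eq_mul_div, mul_comm Q ((1+Q)^2), mul_div_assoc]
    field_simp
    ring
  ext i j
  simp [B, Matrix.mul_apply, Fin.sum_univ_succ, Matrix.vecMulVec_apply, -Matrix.cons_vecMulVec]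
  linear_combination (y i * y j) * key

set_option maxHeartbeats 2000000 in
theorem CtC_aux (y : Fin 4 → ℝ) (hQ : y 0 ^ 2 + y 1 ^ 2 + y 2 ^ 2 + y 3 ^ 2 ≠ 0) :
    (C y)ᵀ * C y = (1/(y 0 ^ 2 + y 1 ^ 2 + y 2 ^ 2 + y 3 ^ 2)^2) •
      ((y 0 ^ 2 + y 1 ^ 2 + y 2 ^ 2 + y 3 ^ 2) • (1 : Matrix (Fin 4) (Fin 4) ℝ)
        - Matrix.vecMulVec y y) := by
  ext i j
  fin_cases i <;> fin_cases j <;>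
    simp [C, Matrix.mul_apply, Fin.sum_univ_succ, Matrix.vecMulVec_apply, Matrix.one_apply] <;>
    field_simp <;> ring

/-- `Bᵀ·B + Cᵀ·C = (1/|y|⁴)·(|y|²·I₄ − ((1−|y|²)²/(1+|y|²)²)·y yᵀ)`. -/
theorem stmt_9 (t : Fin 2 → ℝ) (y : Fin 4 → ℝ) (hy : y ≠ 0) :
    (B t y)ᵀ * B t y + (C y)ᵀ * C y
      = (1 / (y 0 ^ 2 + y 1 ^ 2 + y 2 ^ 2 + y 3 ^ 2) ^ 2) •
          ((y 0 ^ 2 + y 1 ^ 2 + y 2 ^ 2 + y 3 ^ 2) • (1 : Matrix (Fin 4) (Fin 4) ℝ) -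
            ((1 - (y 0 ^ 2 + y 1 ^ 2 + y 2 ^ 2 + y 3 ^ 2)) ^ 2 /
              (1 + (y 0 ^ 2 + y 1 ^ 2 + y 2 ^ 2 + y 3 ^ 2)) ^ 2) •
              Matrix.vecMulVec y y) := by
  have hQ0 : 0 < y 0 ^ 2 + y 1 ^ 2 + y 2 ^ 2 + y 3 ^ 2 := by
    rcases (by positivity : (0:ℝ) ≤ y 0 ^ 2 + y 1 ^ 2 + y 2 ^ 2 + y 3 ^ 2).lt_or_eq with h | h
    · exact h
    · exfalso; apply hy; funext i
      have h0 : y 0 = 0 := by nlinarith [sq_nonneg (y 0), sq_nonneg (y 1), sq_nonneg (y 2), sq_nonneg (y 3)]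
      have h1 : y 1 = 0 := by nlinarith [sq_nonneg (y 0), sq_nonneg (y 1), sq_nonneg (y 2), sq_nonneg (y 3)]
      have h2 : y 2 = 0 := by nlinarith [sq_nonneg (y 0), sq_nonneg (y 1), sq_nonneg (y 2), sq_nonneg (y 3)]
      have h3 : y 3 = 0 := by nlinarith [sq_nonneg (y 0), sq_nonneg (y 1), sq_nonneg (y 2), sq_nonneg (y 3)]
      fin_cases i
      · exact h0
      · exact h1
      · exact h2
      · exact h3
  rw [BtB_aux t y hQ0, CtC_aux y hQ0.ne']
  have h1Q : (1 : ℝ) + (y 0 ^ 2 + y 1 ^ 2 + y 2 ^ 2 + y 3 ^ 2) ≠ 0 := by positivity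
  match_scalars <;> field_simp <;> ring
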